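/- The subgroup Γ of G generated by t, x², y, where G = ⟨t, x, y, z | [x,y] = z, z central in ⟨x,y,z⟩, t² = z, t x t⁻¹ = x⁻¹, t y t⁻¹ = y⁻¹⟩, is torsion-free: every element of Γ of finite order is the identity. -/

import Mathlib

inductive GGen | t | x | y | z

open FreeGroup in
/-- The relations of `G = ⟨t, x, y, z | [x,y] = z, [z,x] = [z,y] = 1, t² = z,
t x t⁻¹ = x⁻¹, t y t⁻¹ = y⁻¹⟩`. -/
def gRels : Set (FreeGroup GGen) :=
  { of GGen.x * of GGen.y * (of GGen.x)⁻¹ * (of GGen.y)⁻¹ * (of GGen.z)⁻¹,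
    of GGen.z * of GGen.x * (of GGen.z)⁻¹ * (of GGen.x)⁻¹,
    of GGen.z * of GGen.y * (of GGen.z)⁻¹ * (of GGen.y)⁻¹,
    of GGen.t * of GGen.t * (of GGen.z)⁻¹,
    of GGen.t * of GGen.x * (of GGen.t)⁻¹ * of GGen.x,
    of GGen.t * of GGen.y * (of GGen.t)⁻¹ * of GGen.y }

/-- The group `G`. -/
abbrev GGrp : Type := PresentedGroup gRels

namespace GGrp
abbrev t : GGrp := PresentedGroup.of GGen.t
abbrev x : GGrp := PresentedGroup.of GGen.x
abbrev y : GGrp := PresentedGroup.of GGen.y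
abbrev z : GGrp := PresentedGroup.of GGen.z
end GGrp



@[ext] structure MG where
  e : Bool
  a : ℤ
  b : ℤ
  c : ℤ
  deriving DecidableEq

namespace MG

def sg (e : Bool) : ℤ := if e then -1 else 1

instance : Mul MG :=
  ⟨fun g h => ⟨xor g.e h.e, sg h.e * g.a + h.a, sg h.e * g.b + h.b,
    g.c + h.c - sg h.e * g.b * h.a + (if g.e && h.e then 1 else 0)⟩⟩

instance : One MG := ⟨⟨false, 0, 0, 0⟩⟩

instance : Inv MG :=
  ⟨fun g => ⟨g.e, -(sg g.e * g.a), -(sg g.e * g.b),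
    -g.c - g.a * g.b - (if g.e then 1 else 0)⟩⟩

lemma mul_def (g h : MG) :
    g * h = ⟨xor g.e h.e, sg h.e * g.a + h.a, sg h.e * g.b + h.b,
      g.c + h.c - sg h.e * g.b * h.a + (if g.e && h.e then 1 else 0)⟩ := rfl

lemma one_def : (1 : MG) = ⟨false, 0, 0, 0⟩ := rfl

lemma inv_def (g : MG) :
    g⁻¹ = ⟨g.e, -(sg g.e * g.a), -(sg g.e * g.b),
      -g.c - g.a * g.b - (if g.e then 1 else 0)⟩ := rfl

instance : Group MG where
  mul_assoc g h k := by
    obtain ⟨e1, a1, b1, c1⟩ := g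
    obtain ⟨e2, a2, b2, c2⟩ := h
    obtain ⟨e3, a3, b3, c3⟩ := k
    cases e1 <;> cases e2 <;> cases e3 <;>
      simp [mul_def, sg] <;> (repeat' apply And.intro) <;> first | trivial | ring
  one_mul g := by obtain ⟨e, a, b, c⟩ := g; cases e <;> simp [mul_def, one_def, sg]
  mul_one g := by obtain ⟨e, a, b, c⟩ := g; cases e <;> simp [mul_def, one_def, sg]
  inv_mul_cancel g := by
    obtain ⟨e, a, b, c⟩ := g
    cases e <;> simp [mul_def, one_def, inv_def, sg] <;> (repeat' apply And.intro) <;> first | trivial | ring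

lemma pow_false (a b c : ℤ) (n : ℕ) :
    ∃ d : ℤ, (⟨false, a, b, c⟩ : MG) ^ n = ⟨false, n * a, n * b, d⟩ := by
  induction n with
  | zero => exact ⟨0, by simp [one_def]⟩
  | succ k ih =>
    obtain ⟨d, hd⟩ := ih
    refine ⟨d + c - b * a * k, ?_⟩
    rw [pow_succ, hd, mul_def]
    simp [sg]
    (repeat' apply And.intro) <;> first | trivial | ring

lemma pow_z (c : ℤ) (n : ℕ) :
    (⟨false, 0, 0, c⟩ : MG) ^ n = ⟨false, 0, 0, n * c⟩ := by
  induction n with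
  | zero => simp [one_def]
  | succ k ih => rw [pow_succ, ih, mul_def]; simp [sg]; (repeat' apply And.intro) <;> first | trivial | ring

lemma X_zpow (a : ℤ) : (⟨false, 1, 0, 0⟩ : MG) ^ a = ⟨false, a, 0, 0⟩ := by
  induction a using Int.induction_on with
  | zero => simp [one_def]
  | succ k ih => rw [zpow_add_one, ih, mul_def]; simp [sg]
  | pred k ih => rw [zpow_sub_one, ih, inv_def, mul_def]; simp [sg] <;> (repeat' apply And.intro) <;> first | trivial | ring

lemma Y_zpow (b : ℤ) : (⟨false, 0, 1, 0⟩ : MG) ^ b = ⟨false, 0, b, 0⟩ := by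
  induction b using Int.induction_on with
  | zero => simp [one_def]
  | succ k ih => rw [zpow_add_one, ih, mul_def]; simp [sg]
  | pred k ih => rw [zpow_sub_one, ih, inv_def, mul_def]; simp [sg] <;> (repeat' apply And.intro) <;> first | trivial | ring

lemma Z_zpow (c : ℤ) : (⟨false, 0, 0, 1⟩ : MG) ^ c = ⟨false, 0, 0, c⟩ := by
  induction c using Int.induction_on with
  | zero => simp [one_def]
  | succ k ih => rw [zpow_add_one, ih, mul_def]; simp [sg]
  | pred k ih => rw [zpow_sub_one, ih, inv_def, mul_def]; simp [sg] <;> (repeat' apply And.intro) <;> first | trivial | ring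

end MG

namespace GGrp

lemma relOne {r : FreeGroup GGen} (h : r ∈ gRels) : PresentedGroup.mk gRels r = 1 :=
  (QuotientGroup.eq_one_iff r).mpr (Subgroup.subset_normalClosure h)

lemma rel1 : x * y * x⁻¹ * y⁻¹ = z := by
  have h := relOne (Set.mem_insert _ _)
  simp only [map_mul, map_inv] at h
  rw [mul_inv_eq_one] at h
  exact h

lemma hzx : Commute z x := by
  have h := relOne (Set.mem_insert_of_mem _ (Set.mem_insert _ _))
  simp only [map_mul, map_inv] at h
  rw [mul_inv_eq_one, mul_inv_eq_iff_eq_mul] at h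
  exact h

lemma hzy : Commute z y := by
  have h := relOne (Set.mem_insert_of_mem _ (Set.mem_insert_of_mem _ (Set.mem_insert _ _)))
  simp only [map_mul, map_inv] at h
  rw [mul_inv_eq_one, mul_inv_eq_iff_eq_mul] at h
  exact h

lemma rel4 : t * t = z := by
  have h := relOne (Set.mem_insert_of_mem _ (Set.mem_insert_of_mem _
    (Set.mem_insert_of_mem _ (Set.mem_insert _ _))))
  simp only [map_mul, map_inv] at h
  rw [mul_inv_eq_one] at h
  exact h

lemma rel5 : t * x * t⁻¹ = x⁻¹ := by
  have h := relOne (Set.mem_insert_of_mem _ (Set.mem_insert_of_mem _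
    (Set.mem_insert_of_mem _ (Set.mem_insert_of_mem _ (Set.mem_insert _ _)))))
  simp only [map_mul, map_inv] at h
  rw [mul_eq_one_iff_eq_inv] at h
  exact h

lemma rel6 : t * y * t⁻¹ = y⁻¹ := by
  have h := relOne (Set.mem_insert_of_mem _ (Set.mem_insert_of_mem _
    (Set.mem_insert_of_mem _ (Set.mem_insert_of_mem _ (Set.mem_insert_of_mem _ rfl)))))
  simp only [map_mul, map_inv] at h
  rw [mul_eq_one_iff_eq_inv] at h
  exact h

lemma hzt : Commute z t := by
  show z * t = t * z
  rw [← rel4, mul_assoc]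


lemma xyx' : x * y * x⁻¹ = y * z := by
  have h := rel1
  rw [mul_inv_eq_iff_eq_mul] at h
  exact h.trans hzy.eq

lemma x_inv_y_x : x⁻¹ * y * x = y * z⁻¹ := by
  have h : x⁻¹ * (x * y * x⁻¹) * x = x⁻¹ * (y * z) * x := by rw [xyx']
  rw [show x⁻¹ * (x * y * x⁻¹) * x = y from by group] at h
  rw [show x⁻¹ * (y * z) * x = x⁻¹ * y * (z * x) from by group, hzx.eq,
    show x⁻¹ * y * (x * z) = (x⁻¹ * y * x) * z from by group] at h
  exact eq_mul_inv_of_mul_eq h.symm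

lemma y_x : y * x = x * y * z⁻¹ := by
  have h : x * (x⁻¹ * y * x) = x * (y * z⁻¹) := by rw [x_inv_y_x]
  rw [show x * (x⁻¹ * y * x) = y * x from by group] at h
  rw [h]; group

lemma y_x_inv : y * x⁻¹ = x⁻¹ * y * z := by
  have h : x⁻¹ * (x * y * x⁻¹) = x⁻¹ * (y * z) := by rw [xyx']
  rw [show x⁻¹ * (x * y * x⁻¹) = y * x⁻¹ from by group] at h
  rw [h]; group

lemma y_xa (a : ℤ) : y * x ^ a = x ^ a * y * z ^ (-a) := by
  induction a using Int.induction_on with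
  | zero => simp
  | succ k ih =>
    rw [show y * x ^ ((k : ℤ) + 1) = (y * x ^ (k : ℤ)) * x from by group, ih,
      show x ^ (k : ℤ) * y * z ^ (-(k : ℤ)) * x = x ^ (k : ℤ) * y * (z ^ (-(k : ℤ)) * x)
        from by group,
      (hzx.zpow_left (-(k : ℤ))).eq,
      show x ^ (k : ℤ) * y * (x * z ^ (-(k : ℤ))) = x ^ (k : ℤ) * (y * x) * z ^ (-(k : ℤ))
        from by group, y_x]
    group
  | pred k ih =>
    simp only [neg_neg] at ih
    rw [show y * x ^ (-(k : ℤ) - 1) = (y * x ^ (-(k : ℤ))) * x⁻¹ from by group, ih,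
      show x ^ (-(k : ℤ)) * y * z ^ (k : ℤ) * x⁻¹ = x ^ (-(k : ℤ)) * y * (z ^ (k : ℤ) * x⁻¹)
        from by group,
      ((hzx.zpow_left (k : ℤ)).inv_right).eq,
      show x ^ (-(k : ℤ)) * y * (x⁻¹ * z ^ (k : ℤ)) = x ^ (-(k : ℤ)) * (y * x⁻¹) * z ^ (k : ℤ)
        from by group, y_x_inv]
    group

lemma yq_xa (q a : ℤ) : y ^ q * x ^ a = x ^ a * y ^ q * z ^ (-(a * q)) := by
  induction q using Int.induction_on with
  | zero => simp
  | succ k ih =>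
    rw [show y ^ ((k : ℤ) + 1) * x ^ a = y * (y ^ (k : ℤ) * x ^ a) from by group, ih,
      show y * (x ^ a * y ^ (k : ℤ) * z ^ (-(a * (k : ℤ)))) =
        (y * x ^ a) * (y ^ (k : ℤ) * z ^ (-(a * (k : ℤ)))) from by group, y_xa,
      show x ^ a * y * z ^ (-a) * (y ^ (k : ℤ) * z ^ (-(a * (k : ℤ)))) =
        x ^ a * y * (z ^ (-a) * y ^ (k : ℤ)) * z ^ (-(a * (k : ℤ))) from by group,
      (hzy.zpow_zpow (-a) (k : ℤ)).eq]
    rw [show x ^ a * y * (y ^ (k : ℤ) * z ^ (-a)) * z ^ (-(a * (k : ℤ))) =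
      x ^ a * (y * y ^ (k : ℤ)) * (z ^ (-a) * z ^ (-(a * (k : ℤ)))) from by group]
    rw [show (-(a * ((k : ℤ) + 1))) = -a + -(a * (k : ℤ)) from by ring]
    group
  | pred k ih =>
    have hinv : y⁻¹ * x ^ a = x ^ a * y⁻¹ * z ^ a := by
      have h : y⁻¹ * (y * x ^ a) * y⁻¹ = y⁻¹ * (x ^ a * y * z ^ (-a)) * y⁻¹ := by
        rw [y_xa]
      rw [show y⁻¹ * (y * x ^ a) * y⁻¹ = x ^ a * y⁻¹ from by group] at h
      rw [show y⁻¹ * (x ^ a * y * z ^ (-a)) * y⁻¹ = y⁻¹ * x ^ a * (y * z ^ (-a) * y⁻¹)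
        from by group, show y * z ^ (-a) * y⁻¹ = (y * z ^ (-a)) * y⁻¹ from rfl,
        (hzy.zpow_left (-a)).symm.eq,
        show z ^ (-a) * y * y⁻¹ = z ^ (-a) from by group] at h
      rw [h]; group
    rw [show y ^ (-(k : ℤ) - 1) * x ^ a = y⁻¹ * (y ^ (-(k : ℤ)) * x ^ a) from by group, ih,
      show y⁻¹ * (x ^ a * y ^ (-(k : ℤ)) * z ^ (-(a * -(k : ℤ)))) =
        (y⁻¹ * x ^ a) * (y ^ (-(k : ℤ)) * z ^ (-(a * -(k : ℤ)))) from by group, hinv,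
      show x ^ a * y⁻¹ * z ^ a * (y ^ (-(k : ℤ)) * z ^ (-(a * -(k : ℤ)))) =
        x ^ a * y⁻¹ * (z ^ a * y ^ (-(k : ℤ))) * z ^ (-(a * -(k : ℤ))) from by group,
      (hzy.zpow_zpow a (-(k : ℤ))).eq]
    rw [show x ^ a * y⁻¹ * (y ^ (-(k : ℤ)) * z ^ a) * z ^ (-(a * -(k : ℤ))) =
      x ^ a * (y⁻¹ * y ^ (-(k : ℤ))) * (z ^ a * z ^ (-(a * -(k : ℤ)))) from by group]
    rw [show (-(a * (-(k : ℤ) - 1))) = a + -(a * -(k : ℤ)) from by ring]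
    group

lemma t_x : t * x = x⁻¹ * t := by
  have h := rel5
  rw [mul_inv_eq_iff_eq_mul] at h
  exact h

lemma t_y : t * y = y⁻¹ * t := by
  have h := rel6
  rw [mul_inv_eq_iff_eq_mul] at h
  exact h

lemma x_t : x * t = t * x⁻¹ := by
  have h : x * (t * x) = x * (x⁻¹ * t) := by rw [t_x]
  rw [show x * (x⁻¹ * t) = t from by group, ← mul_assoc] at h
  exact eq_mul_inv_of_mul_eq h

lemma y_t : y * t = t * y⁻¹ := by
  have h : y * (t * y) = y * (y⁻¹ * t) := by rw [t_y]
  rw [show y * (y⁻¹ * t) = t from by group, ← mul_assoc] at h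
  exact eq_mul_inv_of_mul_eq h

lemma t_xa (a : ℤ) : t * x ^ a = x ^ (-a) * t := by
  induction a using Int.induction_on with
  | zero => simp
  | succ k ih =>
    rw [show t * x ^ ((k : ℤ) + 1) = (t * x ^ (k : ℤ)) * x from by group, ih,
      mul_assoc, t_x]
    group
  | pred k ih =>
    rw [show t * x ^ (-(k : ℤ) - 1) = (t * x ^ (-(k : ℤ))) * x⁻¹ from by group, ih,
      mul_assoc, show t * x⁻¹ = x * t from x_t.symm]
    group

lemma t_ya (a : ℤ) : t * y ^ a = y ^ (-a) * t := by
  induction a using Int.induction_on with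
  | zero => simp
  | succ k ih =>
    rw [show t * y ^ ((k : ℤ) + 1) = (t * y ^ (k : ℤ)) * y from by group, ih,
      mul_assoc, t_y]
    group
  | pred k ih =>
    rw [show t * y ^ (-(k : ℤ) - 1) = (t * y ^ (-(k : ℤ))) * y⁻¹ from by group, ih,
      mul_assoc, show t * y⁻¹ = y * t from y_t.symm]
    group

lemma xa_t (a : ℤ) : x ^ a * t = t * x ^ (-a) := by
  have h := t_xa (-a)
  rw [neg_neg] at h
  rw [h]

lemma ya_t (a : ℤ) : y ^ a * t = t * y ^ (-a) := by
  have h := t_ya (-a)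
  rw [neg_neg] at h
  rw [h]

/-- normal form word -/
def A (a q r : ℤ) : GGrp := x ^ a * y ^ q * z ^ r

lemma A_mul (a q r a' q' r' : ℤ) :
    A a q r * A a' q' r' = A (a + a') (q + q') (r + r' - a' * q) := by
  unfold A
  rw [show x ^ a * y ^ q * z ^ r * (x ^ a' * y ^ q' * z ^ r') =
    x ^ a * (y ^ q * (z ^ r * x ^ a')) * (y ^ q' * z ^ r') from by group,
    (hzx.zpow_zpow r a').eq,
    show x ^ a * (y ^ q * (x ^ a' * z ^ r)) * (y ^ q' * z ^ r') =
      x ^ a * ((y ^ q * x ^ a') * (z ^ r * y ^ q')) * z ^ r' from by group,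
    yq_xa, (hzy.zpow_zpow r q').eq,
    show x ^ a * (x ^ a' * y ^ q * z ^ (-(a' * q)) * (y ^ q' * z ^ r)) * z ^ r' =
      x ^ a * (x ^ a' * (y ^ q * (z ^ (-(a' * q)) * y ^ q'))) * (z ^ r * z ^ r')
      from by group,
    (hzy.zpow_zpow (-(a' * q)) q').eq,
    show (r + r' - a' * q) = -(a' * q) + r + r' from by ring]
  group

lemma A_one : A 0 0 0 = 1 := by unfold A; group

lemma A_t (a q r : ℤ) : A a q r * t = t * A (-a) (-q) r := by
  unfold A
  rw [show x ^ a * y ^ q * z ^ r * t = x ^ a * (y ^ q * (z ^ r * t)) from by group,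
    (hzt.zpow_left r).eq,
    show x ^ a * (y ^ q * (t * z ^ r)) = x ^ a * ((y ^ q * t) * z ^ r) from by group,
    ya_t,
    show x ^ a * (t * y ^ (-q) * z ^ r) = (x ^ a * t) * (y ^ (-q) * z ^ r) from by group,
    xa_t]
  group

lemma A_inv (a q r : ℤ) : (A a q r)⁻¹ = A (-a) (-q) (-r - a * q) := by
  refine inv_eq_of_mul_eq_one_left ?_
  rw [A_mul, show (-a + a) = 0 from by ring, show (-q + q) = 0 from by ring,
    show (-r - a * q + r - a * -q) = 0 from by ring, A_one]

lemma t_inv : t⁻¹ = z⁻¹ * t := by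
  refine inv_eq_of_mul_eq_one_left ?_
  rw [mul_assoc, rel4]
  group


lemma zA (a q r : ℤ) : z * A a q r = A a q (r + 1) := by
  unfold A
  rw [show z * (x ^ a * y ^ q * z ^ r) = (z * x ^ a) * (y ^ q * z ^ r) from by group,
    (hzx.zpow_right a).eq,
    show x ^ a * z * (y ^ q * z ^ r) = x ^ a * ((z * y ^ q) * z ^ r) from by group,
    (hzy.zpow_right q).eq]
  group

lemma Az_inv (a q r : ℤ) : A a q r * z⁻¹ = A a q (r - 1) := by unfold A; group

lemma A_congr {a a' q q' r r' : ℤ} (h1 : a = a') (h2 : q = q') (h3 : r = r') :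
    A a q r = A a' q' r' := by rw [h1, h2, h3]

lemma mem_nf {g : GGrp} (hg : g ∈ Subgroup.closure {t, x ^ 2, y}) :
    (∃ p q r : ℤ, g = A (2 * p) q r) ∨ (∃ p q r : ℤ, g = t * A (2 * p) q r) := by
  induction hg using Subgroup.closure_induction with
  | mem w hw =>
    simp only [Set.mem_insert_iff, Set.mem_singleton_iff] at hw
    rcases hw with rfl | rfl | rfl
    · right; exact ⟨0, 0, 0, by norm_num [A]⟩
    · left; refine ⟨1, 0, 0, by norm_num [A]⟩
    · left; exact ⟨0, 1, 0, by norm_num [A]⟩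
  | one => left; exact ⟨0, 0, 0, by norm_num [A]⟩
  | mul g h _ _ ihg ihh =>
    rcases ihg with ⟨p, q, r, rfl⟩ | ⟨p, q, r, rfl⟩ <;>
      rcases ihh with ⟨p', q', r', rfl⟩ | ⟨p', q', r', rfl⟩
    · left
      refine ⟨p + p', q + q', r + r' - 2 * p' * q, ?_⟩
      rw [A_mul]
      exact A_congr (by ring) (by ring) (by ring)
    · right
      refine ⟨-p + p', -q + q', r + r' + 2 * p' * q, ?_⟩
      rw [← mul_assoc, A_t, mul_assoc, A_mul]
      exact congrArg (t * ·) (A_congr (by ring) (by ring) (by ring))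
    · right
      refine ⟨p + p', q + q', r + r' - 2 * p' * q, ?_⟩
      rw [mul_assoc, A_mul]
      exact congrArg (t * ·) (A_congr (by ring) (by ring) (by ring))
    · left
      refine ⟨-p + p', -q + q', r + r' + 2 * p' * q + 1, ?_⟩
      rw [show t * A (2 * p) q r * (t * A (2 * p') q' r') =
        t * (A (2 * p) q r * t) * A (2 * p') q' r' from by group, A_t,
        show t * (t * A (-(2 * p)) (-q) r) * A (2 * p') q' r' =
          (t * t) * (A (-(2 * p)) (-q) r * A (2 * p') q' r') from by group, rel4, A_mul, zA]
      exact A_congr (by ring) (by ring) (by ring)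
  | inv g _ ihg =>
    rcases ihg with ⟨p, q, r, rfl⟩ | ⟨p, q, r, rfl⟩
    · left
      refine ⟨-p, -q, -r - 2 * p * q, ?_⟩
      rw [A_inv]
      exact A_congr (by ring) (by ring) (by ring)
    · right
      refine ⟨p, q, -r - 2 * p * q - 1, ?_⟩
      rw [show (t * A (2 * p) q r)⁻¹ = (A (2 * p) q r)⁻¹ * t⁻¹ from by group, A_inv, t_inv,
        show A (-(2 * p)) (-q) (-r - 2 * p * q) * (z⁻¹ * t) =
          (A (-(2 * p)) (-q) (-r - 2 * p * q) * z⁻¹) * t from by group, Az_inv, A_t]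
      exact congrArg (t * ·) (A_congr (by ring) (by ring) (by ring))

end GGrp

def mgen : GGen → MG
  | .t => ⟨true, 0, 0, 0⟩
  | .x => ⟨false, 1, 0, 0⟩
  | .y => ⟨false, 0, 1, 0⟩
  | .z => ⟨false, 0, 0, 1⟩

lemma mrels : ∀ r ∈ gRels, FreeGroup.lift mgen r = 1 := by
  intro r hr
  simp only [gRels, Set.mem_insert_iff, Set.mem_singleton_iff] at hr
  rcases hr with rfl | rfl | rfl | rfl | rfl | rfl <;>
    · simp only [map_mul, map_inv, FreeGroup.lift_apply_of]
      decide

def φ : GGrp →* MG := PresentedGroup.toGroup mrels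

lemma φ_t : φ GGrp.t = ⟨true, 0, 0, 0⟩ := PresentedGroup.toGroup.of mrels
lemma φ_x : φ GGrp.x = ⟨false, 1, 0, 0⟩ := PresentedGroup.toGroup.of mrels
lemma φ_y : φ GGrp.y = ⟨false, 0, 1, 0⟩ := PresentedGroup.toGroup.of mrels
lemma φ_z : φ GGrp.z = ⟨false, 0, 0, 1⟩ := PresentedGroup.toGroup.of mrels

lemma φ_A (a q r : ℤ) : φ (GGrp.A a q r) = ⟨false, a, q, r⟩ := by
  unfold GGrp.A
  rw [map_mul, map_mul, map_zpow, map_zpow, map_zpow, φ_x, φ_y, φ_z,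
    MG.X_zpow, MG.Y_zpow, MG.Z_zpow]
  simp [MG.mul_def, MG.sg]

lemma φ_tA (a q r : ℤ) : φ (GGrp.t * GGrp.A a q r) = ⟨true, a, q, r⟩ := by
  rw [map_mul, φ_t, φ_A, MG.mul_def]
  simp [MG.sg]


/-- The subgroup of `G` generated by `t`, `x²`, `y` is torsion-free. -/
theorem stmt_14 (g : GGrp) (hg : g ∈ Subgroup.closure {GGrp.t, GGrp.x ^ 2, GGrp.y})
    (h : IsOfFinOrder g) : g = 1 := by
  rcases GGrp.mem_nf hg with ⟨p, q, r, rfl⟩ | ⟨p, q, r, rfl⟩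
  · obtain ⟨n, hn, hgn⟩ := isOfFinOrder_iff_pow_eq_one.mp h
    have hn' : (n : ℤ) ≠ 0 := Int.natCast_ne_zero.mpr hn.ne'
    have hφ : (φ (GGrp.A (2 * p) q r)) ^ n = 1 := by rw [← map_pow, hgn, map_one]
    rw [φ_A] at hφ
    obtain ⟨d, hd⟩ := MG.pow_false (2 * p) q r n
    rw [hd, MG.one_def, MG.mk.injEq] at hφ
    obtain ⟨-, ha, hb, -⟩ := hφ
    have hp : p = 0 := by
      rcases mul_eq_zero.mp ha with h' | h'
      · exact absurd h' hn'
      · omega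
    have hq : q = 0 := by
      rcases mul_eq_zero.mp hb with h' | h'
      · exact absurd h' hn'
      · exact h'
    subst hp hq
    have hφ2 : (φ (GGrp.A (2 * 0) 0 r)) ^ n = 1 := by rw [← map_pow, hgn, map_one]
    rw [φ_A, show (2 * (0 : ℤ)) = 0 from by ring, MG.pow_z, MG.one_def, MG.mk.injEq] at hφ2
    obtain ⟨-, -, -, hc⟩ := hφ2
    have hr : r = 0 := by
      rcases mul_eq_zero.mp hc with h' | h'
      · exact absurd h' hn'
      · exact h'
    subst hr
    norm_num [GGrp.A]
  · exfalso
    obtain ⟨n, hn, hgn⟩ := isOfFinOrder_iff_pow_eq_one.mp h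
    have hn' : (n : ℤ) ≠ 0 := Int.natCast_ne_zero.mpr hn.ne'
    have hsq : (GGrp.t * GGrp.A (2 * p) q r) ^ (2 * n) = 1 := by
      rw [mul_comm 2 n, pow_mul, hgn, one_pow]
    have hφ : (φ (GGrp.t * GGrp.A (2 * p) q r)) ^ (2 * n) = 1 := by
      rw [← map_pow, hsq, map_one]
    rw [φ_tA, pow_mul] at hφ
    have h2 : (⟨true, 2 * p, q, r⟩ : MG) ^ 2 = ⟨false, 0, 0, 2 * r + 2 * p * q + 1⟩ := by
      rw [pow_two, MG.mul_def]
      simp [MG.sg]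
      ring
    rw [h2, MG.pow_z, MG.one_def, MG.mk.injEq] at hφ
    obtain ⟨-, -, -, hc⟩ := hφ
    rcases mul_eq_zero.mp hc with h' | h'
    · exact absurd h' hn'
    · have h'' : 2 * r + 2 * (p * q) + 1 = 0 := by linarith [h']
      omega
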